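/- arXiv:1710.03912 — 2 statements merged into one kernel-verified Lean document; each statement's English description precedes it below -/
import Mathlib

section
/- Let Φ be a rule set and κ a regular cardinal such that every rule (P, c) ∈ Φ satisfies |P| < κ. Then Iter_Φ(κ) is a fixed point of op_Φ, i.e., the closing ordinal of Φ is at most κ. -/
universe u
variable {U : Type u}

/-- The operator associated to a rule set: collect conclusions of rules whose premises hold. -/
def RuleOp (Φ : Set (Set U × U)) (X : Set U) : Set U :=
  {c | ∃ P, (P, c) ∈ Φ ∧ P ⊆ X}

/-- A set is Φ-closed if it contains the conclusion of every rule whose premises it contains. -/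
def RuleClosed (Φ : Set (Set U × U)) (X : Set U) : Prop :=
  ∀ P c, (P, c) ∈ Φ → P ⊆ X → c ∈ X

/-- The intersection of all Φ-closed sets. -/
def RuleLfp (Φ : Set (Set U × U)) : Set U :=
  ⋂₀ {X | RuleClosed Φ X}

/-- Transfinite iteration of the rule-set operator. -/
noncomputable def RuleIter (Φ : Set (Set U × U)) : Ordinal.{u} → Set U
  | α => ⋃ β : {β : Ordinal.{u} // β < α}, (RuleIter Φ β.1 ∪ RuleOp Φ (RuleIter Φ β.1))
  termination_by α => α
  decreasing_by exact β.2

/-!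
Every element of `RuleIter Φ α` is already produced at some successor stage `β + 1 < α` when
`α` is a limit. A rule whose premise set `P` is contained in `RuleIter Φ α` thus has each premise
appear at a stage below `α`; if `#P < cof α`, the supremum of these stages is still below `α`,
so the conclusion is produced before `α`. For regular `κ`, `cof κ.ord = κ`.
-/

open Cardinal Order

theorem RuleOp.mono (Φ : Set (Set U × U)) : Monotone (RuleOp Φ) :=
  fun _ _ h _ ⟨P, hP, hPX⟩ => ⟨P, hP, hPX.trans h⟩

namespace RuleIter

variable (Φ : Set (Set U × U))

theorem eq_iUnion (α : Ordinal.{u}) :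
    RuleIter Φ α =
      ⋃ β : {β : Ordinal.{u} // β < α}, (RuleIter Φ β.1 ∪ RuleOp Φ (RuleIter Φ β.1)) := by
  rw [RuleIter]

theorem union_ruleOp_subset {β α : Ordinal.{u}} (h : β < α) :
    RuleIter Φ β ∪ RuleOp Φ (RuleIter Φ β) ⊆ RuleIter Φ α := by
  rw [eq_iUnion Φ α]
  exact Set.subset_iUnion_of_subset ⟨β, h⟩ subset_rfl

theorem mono : Monotone (RuleIter Φ) := fun β α h => by
  rw [eq_iUnion Φ β, eq_iUnion Φ α]
  exact Set.iUnion_mono' fun γ => ⟨⟨γ.1, γ.2.trans_le h⟩, subset_rfl⟩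

theorem subset_ruleOp (α : Ordinal.{u}) :
    RuleIter Φ α ⊆ RuleOp Φ (RuleIter Φ α) := by
  intro x hx
  induction α using WellFoundedLT.induction with
  | _ α ih =>
    rw [eq_iUnion] at hx
    obtain ⟨_, ⟨⟨β, hβ⟩, rfl⟩, hxβ | hxβ⟩ := hx
    · exact RuleOp.mono Φ (mono Φ hβ.le) (ih β hβ hxβ)
    · exact RuleOp.mono Φ (mono Φ hβ.le) hxβ

theorem exists_lt_mem_succ {α : Ordinal.{u}} {x : U} (hx : x ∈ RuleIter Φ α) :
    ∃ β < α, x ∈ RuleIter Φ (succ β) := by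
  rw [eq_iUnion] at hx
  obtain ⟨_, ⟨⟨β, hβ⟩, rfl⟩, hxβ⟩ := hx
  exact ⟨β, hβ, union_ruleOp_subset Φ (lt_succ β) hxβ⟩

theorem exists_lt_subset_of_isSuccLimit {α : Ordinal.{u}} (hα : IsSuccLimit α) {P : Set U}
    (hP : #P < α.cof) (hPα : P ⊆ RuleIter Φ α) : ∃ β < α, P ⊆ RuleIter Φ β := by
  have hstage : ∀ p : P, ∃ β < α, (p : U) ∈ RuleIter Φ β := fun p => by
    obtain ⟨β, hβ, hp⟩ := exists_lt_mem_succ Φ (hPα p.2)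
    exact ⟨succ β, hα.succ_lt hβ, hp⟩
  choose stage hstage_lt hmem_stage using hstage
  refine ⟨⨆ p, stage p, Ordinal.iSup_lt_of_lt_cof hP hstage_lt, fun p hp => ?_⟩
  exact mono Φ (Ordinal.le_iSup stage ⟨p, hp⟩) (hmem_stage ⟨p, hp⟩)

end RuleIter

theorem ruleOp_ruleIter_eq_of_lt_cof (Φ : Set (Set U × U)) {α : Ordinal.{u}}
    (hα : IsSuccLimit α) (hcard : ∀ P c, (P, c) ∈ Φ → #P < α.cof) :
    RuleOp Φ (RuleIter Φ α) = RuleIter Φ α := by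
  refine Set.Subset.antisymm ?_ (RuleIter.subset_ruleOp Φ α)
  rintro c ⟨P, hP, hPα⟩
  obtain ⟨β, hβ, hPβ⟩ := RuleIter.exists_lt_subset_of_isSuccLimit Φ hα (hcard P c hP) hPα
  exact RuleIter.union_ruleOp_subset Φ hβ (Or.inr ⟨P, hP, hPβ⟩)

theorem closing_ordinal_le_regular (Φ : Set (Set U × U)) (κ : Cardinal.{u})
    (hreg : κ.IsRegular)
    (hcard : ∀ P c, (P, c) ∈ Φ → Cardinal.mk P < κ) :
    RuleOp Φ (RuleIter Φ κ.ord) = RuleIter Φ κ.ord :=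
  ruleOp_ruleIter_eq_of_lt_cof Φ (isSuccLimit_ord hreg.aleph0_le)
    (by rwa [hreg.cof_ord])
end

section
/- Let V be the von Neumann universe V_κ for an uncountable strongly inaccessible cardinal κ, let Φ be a rule set based on V, and let λ ∈ V be a cardinal such that |P| ≤ λ for every rule (P, c) ∈ Φ. Then the closing ordinal of Φ is an element of V. -/
/-!
If every rule has fewer than `ν` premises for a regular cardinal `ν`, then the iteration is
already closed at stage `ν`: the premises of a rule applicable at stage `ν` all appear at stages
below `ν`, and by regularity fewer than `ν` stages below `ν` are bounded below `ν`. Taking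
`ν = (λ ⊔ ℵ₀)⁺`, which is regular and lies below the uncountable strong limit `κ`, shows that the
closing ordinal is below `κ`, i.e. in `V_κ`.
-/

universe u
variable {U : Type u}

/-- The von Neumann hierarchy as a class of ZF sets: `Vclass α = ⋃_{β < α} 𝒫(Vclass β)`. -/
noncomputable def Vclass : Ordinal.{0} → Set ZFSet
  | α => ⋃ β : {β : Ordinal.{0} // β < α}, {x : ZFSet | ∀ y ∈ x, y ∈ Vclass β.1}
  termination_by α => α
  decreasing_by exact β.2

section RuleIter

variable (Φ : Set (Set U × U))

theorem ruleOp_mono : Monotone (RuleOp Φ) := by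
  rintro X Y hXY c ⟨P, hP, hPX⟩
  exact ⟨P, hP, hPX.trans hXY⟩

theorem mem_ruleIter_iff' {α : Ordinal.{u}} {x : U} :
    x ∈ RuleIter Φ α ↔ ∃ β < α, x ∈ RuleIter Φ β ∪ RuleOp Φ (RuleIter Φ β) := by
  rw [RuleIter]
  simp only [Set.mem_iUnion, Subtype.exists, exists_prop]

theorem ruleIter_mono : Monotone (RuleIter Φ) := by
  intro β α hβα x hx
  obtain ⟨γ, hγ, hx⟩ := (mem_ruleIter_iff' Φ).1 hx
  exact (mem_ruleIter_iff' Φ).2 ⟨γ, hγ.trans_le hβα, hx⟩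

theorem ruleIter_subset_ruleOp (α : Ordinal.{u}) :
    RuleIter Φ α ⊆ RuleOp Φ (RuleIter Φ α) := by
  induction α using WellFoundedLT.induction with
  | ind α ih =>
    intro x hx
    obtain ⟨β, hβ, hx | hx⟩ := (mem_ruleIter_iff' Φ).1 hx
    · exact ruleOp_mono Φ (ruleIter_mono Φ hβ.le) (ih β hβ hx)
    · exact ruleOp_mono Φ (ruleIter_mono Φ hβ.le) hx

theorem mem_ruleIter_iff {α : Ordinal.{u}} {x : U} :
    x ∈ RuleIter Φ α ↔ ∃ β < α, x ∈ RuleOp Φ (RuleIter Φ β) := by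
  rw [mem_ruleIter_iff']
  refine exists_congr fun β => and_congr_right fun _ => ?_
  rw [Set.union_eq_right.2 (ruleIter_subset_ruleOp Φ β)]

theorem ruleOp_ruleIter_subset_of_lt {β α : Ordinal.{u}} (h : β < α) :
    RuleOp Φ (RuleIter Φ β) ⊆ RuleIter Φ α :=
  fun _ hx => (mem_ruleIter_iff Φ).2 ⟨β, h, hx⟩

theorem ruleOp_ruleIter_ord_eq {ν : Cardinal.{u}} (hν : ν.IsRegular)
    (hΦ : ∀ P c, (P, c) ∈ Φ → Cardinal.mk P < ν) :
    RuleOp Φ (RuleIter Φ ν.ord) = RuleIter Φ ν.ord := by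
  refine (Set.Subset.antisymm ?_ (ruleIter_subset_ruleOp Φ _))
  rintro c ⟨P, hPΦ, hPsub⟩
  have hstage : ∀ x : P, ∃ β < ν.ord, (x : U) ∈ RuleIter Φ β := by
    intro x
    obtain ⟨β, hβ, hx⟩ := (mem_ruleIter_iff Φ).1 (hPsub x.2)
    exact ⟨Order.succ β, (Cardinal.isSuccLimit_ord hν.aleph0_le).succ_lt hβ,
      ruleOp_ruleIter_subset_of_lt Φ (Order.lt_succ β) hx⟩
  choose f hf_lt hf_mem using hstage
  have hsup : iSup f < ν.ord :=
    Ordinal.iSup_lt_of_lt_cof (by rw [hν.cof_ord]; exact hΦ P c hPΦ) hf_lt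
  have hP : P ⊆ RuleIter Φ (iSup f) := fun x hx =>
    ruleIter_mono Φ (Ordinal.le_iSup f ⟨x, hx⟩) (hf_mem ⟨x, hx⟩)
  exact ruleOp_ruleIter_subset_of_lt Φ hsup ⟨P, hPΦ, hP⟩

theorem exists_least_fixed_ruleIter_le {α : Ordinal.{u}}
    (hα : RuleOp Φ (RuleIter Φ α) = RuleIter Φ α) :
    ∃ β : Ordinal.{u}, RuleOp Φ (RuleIter Φ β) = RuleIter Φ β ∧
      (∀ γ : Ordinal.{u}, RuleOp Φ (RuleIter Φ γ) = RuleIter Φ γ → β ≤ γ) ∧ β ≤ α := by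
  let S : Set Ordinal.{u} := {β | RuleOp Φ (RuleIter Φ β) = RuleIter Φ β}
  exact ⟨sInf S, csInf_mem (⟨α, hα⟩ : S.Nonempty), fun _ hγ => csInf_le' hγ, csInf_le' hα⟩

end RuleIter

theorem closing_ordinal_mem_V_general (κ : Cardinal.{0})
    (huncount : Cardinal.aleph0 < κ) (hsl : κ.IsStrongLimit)
    (Φ : Set (Set ZFSet × ZFSet))
    (lam : Cardinal.{0}) (hlamV : lam < κ)
    (hcard : ∀ P c, (P, c) ∈ Φ → Cardinal.mk P ≤ Cardinal.lift.{1} lam) :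
    ∃ α : Ordinal.{1},
      RuleOp Φ (RuleIter Φ α) = RuleIter Φ α ∧
      (∀ β : Ordinal.{1}, RuleOp Φ (RuleIter Φ β) = RuleIter Φ β → α ≤ β) ∧
      α < Ordinal.lift.{1} κ.ord := by
  set ν : Cardinal.{0} := Order.succ (lam ⊔ Cardinal.aleph0)
  have hν_reg : ν.IsRegular := Cardinal.isRegular_succ le_sup_right
  have hν_lt : ν < κ := hsl.isSuccLimit.succ_lt (sup_lt_iff.2 ⟨hlamV, huncount⟩)
  have hΦ : ∀ P c, (P, c) ∈ Φ → Cardinal.mk P < Cardinal.lift.{1} ν := fun P c h =>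
    (hcard P c h).trans_lt
      (Cardinal.lift_lt.2 ((le_sup_left : lam ≤ _).trans_lt (Order.lt_succ _)))
  have hfix := ruleOp_ruleIter_ord_eq Φ hν_reg.lift hΦ
  obtain ⟨α, hα_fix, hα_least, hα_le⟩ := exists_least_fixed_ruleIter_le Φ hfix
  refine ⟨α, hα_fix, hα_least, hα_le.trans_lt ?_⟩
  rw [← Cardinal.lift_ord, Ordinal.lift_lt, Cardinal.ord_lt_ord]
  exact hν_lt

theorem closing_ordinal_mem_V (κ : Cardinal.{0})
    (huncount : Cardinal.aleph0 < κ) (hreg : κ.IsRegular) (hsl : κ.IsStrongLimit)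
    (Φ : Set (Set ZFSet × ZFSet))
    (hbase : ∀ P c, (P, c) ∈ Φ → P ⊆ Vclass κ.ord ∧ c ∈ Vclass κ.ord)
    (lam : Cardinal.{0}) (hlamV : lam < κ)
    (hcard : ∀ P c, (P, c) ∈ Φ → Cardinal.mk P ≤ Cardinal.lift.{1} lam) :
    ∃ α : Ordinal.{1},
      RuleOp Φ (RuleIter Φ α) = RuleIter Φ α ∧
      (∀ β : Ordinal.{1}, RuleOp Φ (RuleIter Φ β) = RuleIter Φ β → α ≤ β) ∧
      α < Ordinal.lift.{1} κ.ord :=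
  closing_ordinal_mem_V_general κ huncount hsl Φ lam hlamV hcard
end
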